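/- arXiv:2408.13805 — 8 statements merged into one kernel-verified Lean document; each statement's English description precedes it below -/
import Mathlib

section
/- Let a, b, α be real numbers with a > 0, b > 0 and α > 0, and set t* = max 0 ((1/α)·log(b/a)). Then for every t ≥ 0, −a·t − (b/α)·exp(−α·t) ≤ −a·t* − (b/α)·exp(−α·t*), with strict inequality whenever t ≥ 0 and t ≠ t*; that is, t* is the unique global maximizer over [0, ∞) of the function t ↦ −a·t − (b/α)·exp(−α·t). -/
theorem stmt_2 (a b α : ℝ) (ha : 0 < a) (hb : 0 < b) (hα : 0 < α)
    (tstar : ℝ) (htstar : tstar = max 0 ((1 / α) * Real.log (b / a))) :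
    (∀ t : ℝ, 0 ≤ t →
      -a * t - (b / α) * Real.exp (-α * t) ≤
        -a * tstar - (b / α) * Real.exp (-α * tstar)) ∧
    (∀ t : ℝ, 0 ≤ t → t ≠ tstar →
      -a * t - (b / α) * Real.exp (-α * t) <
        -a * tstar - (b / α) * Real.exp (-α * tstar)) := by
  have hba : 0 < b / a := div_pos hb ha
  have hprod : ∀ t : ℝ, 0 ≤ t →
      (t - tstar) * (b * Real.exp (-α * tstar) - a) ≤ 0 := by
    intro t ht
    rcases le_or_gt a b with hab | hab
    · have hlog : 0 ≤ (1 / α) * Real.log (b / a) := by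
        have : 0 ≤ Real.log (b / a) := Real.log_nonneg ((one_le_div ha).2 hab)
        positivity
      have hts : tstar = (1 / α) * Real.log (b / a) := by
        rw [htstar, max_eq_right hlog]
      have hE : Real.exp (-α * tstar) = a / b := by
        rw [hts]
        have : -α * ((1 / α) * Real.log (b / a)) = -Real.log (b / a) := by
          field_simp
        rw [this, Real.exp_neg, Real.exp_log hba, inv_div]
      rw [hE]
      have : b * (a / b) - a = 0 := by field_simp; ring
      rw [this, mul_zero]
    · have hlog : (1 / α) * Real.log (b / a) ≤ 0 := by
        have h1 : Real.log (b / a) ≤ 0 := Real.log_nonpos (le_of_lt hba) ((div_le_one ha).2 hab.le)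
        have h2 : 0 ≤ 1 / α := by positivity
        exact mul_nonpos_of_nonneg_of_nonpos h2 h1
      have hts : tstar = 0 := by rw [htstar, max_eq_left hlog]
      rw [hts]
      simp only [mul_zero, neg_zero, Real.exp_zero, mul_one, sub_zero]
      nlinarith
  have hstrict : ∀ t : ℝ, 0 ≤ t → t ≠ tstar →
      -a * t - (b / α) * Real.exp (-α * t) <
        -a * tstar - (b / α) * Real.exp (-α * tstar) := by
    intro t ht htne
    have hkey : -α * t = -α * tstar + -α * (t - tstar) := by ring
    have hd : -α * (t - tstar) ≠ 0 :=
      mul_ne_zero (neg_ne_zero.2 hα.ne') (sub_ne_zero.2 htne)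
    have h1 : -α * (t - tstar) + 1 < Real.exp (-α * (t - tstar)) :=
      Real.add_one_lt_exp hd
    have hE : 0 < Real.exp (-α * tstar) := Real.exp_pos _
    have hc : 0 < (b / α) * Real.exp (-α * tstar) := by positivity
    have h2 : (b / α) * Real.exp (-α * tstar) * (-α * (t - tstar) + 1) <
        (b / α) * Real.exp (-α * tstar) * Real.exp (-α * (t - tstar)) :=
      (mul_lt_mul_iff_right₀ hc).2 h1
    have hp := hprod t ht
    have h3 : (b / α) * Real.exp (-α * tstar) * (-α * (t - tstar) + 1) =
        (b / α) * Real.exp (-α * tstar) - b * Real.exp (-α * tstar) * (t - tstar) := by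
      field_simp
      ring
    rw [h3] at h2
    have hp' : b * Real.exp (-α * tstar) * (t - tstar) ≤ a * (t - tstar) := by
      nlinarith [hp]
    rw [hkey, Real.exp_add]
    nlinarith [h2, hp']
  refine ⟨fun t ht => ?_, hstrict⟩
  rcases eq_or_ne t tstar with h | h
  · rw [h]
  · exact le_of_lt (hstrict t ht h)
end

section
/- Let N be a positive natural number, let α be a real number with α > 0, and let e : Fin N → ℝ satisfy e i > 0 for all i. Set S = ∑_j e j and define A(e) = ∑_i (e i / S)^{α+1} (real powers). Then for each index k, the function t ↦ A(Function.update e k t) has derivative at t = e k equal to ((α+1)/S^{α+1})·( (e k)^α − ∑_i (e i / S)·(e i)^α ). In particular this partial derivative is positive if and only if (e k)^α > ∑_i (e i / S)·(e i)^α, and negative if and only if (e k)^α < ∑_i (e i / S)·(e i)^α; hence a gradient-descent update of e k that minimizes A is negative when (e k)^α exceeds the weighted mean ∑_i (e i / S)·(e i)^α and positive when it falls below it. -/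
open Finset

theorem stmt_5 (N : ℕ) (hN : 0 < N) (α : ℝ) (hα : 0 < α)
    (e : Fin N → ℝ) (he : ∀ i, 0 < e i)
    (S : ℝ) (hS : S = ∑ j, e j)
    (A : (Fin N → ℝ) → ℝ)
    (hA : ∀ f : Fin N → ℝ,
      A f = ∑ i, (f i / ∑ j, f j) ^ (α + 1))
    (k : Fin N) :
    HasDerivAt (fun t => A (Function.update e k t))
      (((α + 1) / S ^ (α + 1)) * (e k ^ α - ∑ i, (e i / S) * e i ^ α)) (e k) ∧
    (0 < ((α + 1) / S ^ (α + 1)) * (e k ^ α - ∑ i, (e i / S) * e i ^ α) ↔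
      (∑ i, (e i / S) * e i ^ α) < e k ^ α) ∧
    (((α + 1) / S ^ (α + 1)) * (e k ^ α - ∑ i, (e i / S) * e i ^ α) < 0 ↔
      e k ^ α < ∑ i, (e i / S) * e i ^ α) := by
  have hS0 : 0 < S := by
    rw [hS]
    exact Finset.sum_pos (fun i _ => he i) (univ_nonempty_iff.mpr ⟨⟨0, hN⟩⟩)
  have hSne : S ≠ 0 := ne_of_gt hS0
  have hc : 0 < (α + 1) / S ^ (α + 1) := by positivity
  refine ⟨?_, ?_, ?_⟩
  · -- rewrite the function
    have hfun : (fun t => A (Function.update e k t))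
        = fun t => ∑ i, (Function.update e k t i / (S - e k + t)) ^ (α + 1) := by
      funext t
      rw [hA]
      have hsum : ∑ j, Function.update e k t j = S - e k + t := by
        rw [Finset.sum_update_of_mem (Finset.mem_univ k)]
        have : ∑ j, e j = ∑ j ∈ univ \ {k}, e j + e k := by
          rw [Finset.sum_eq_sum_sdiff_singleton_add (Finset.mem_univ k)]
        rw [hS, this]; ring
      rw [hsum]
    rw [hfun]
    have hden : HasDerivAt (fun t : ℝ => S - e k + t) 1 (e k) := by
      simpa using (hasDerivAt_id (e k)).const_add (S - e k)
    have hdval : S - e k + e k = S := by ring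
    have hkey : ∀ i, HasDerivAt (fun t => (Function.update e k t i / (S - e k + t)) ^ (α + 1))
        ((α + 1) * (e i / S) ^ α * (if i = k then (S - e k) / S ^ 2 else -(e i) / S ^ 2)) (e k) := by
      intro i
      by_cases hik : i = k
      · subst hik
        have h1 : HasDerivAt (fun t : ℝ => Function.update e i t i / (S - e i + t))
            ((1 * (S - e i + e i) - e i * 1) / (S - e i + e i) ^ 2) (e i) := by
          have := (hasDerivAt_id (e i)).div hden (by rw [hdval]; exact hSne)
          simpa [Function.update_self] using this.congr_of_eventuallyEq
            (Filter.Eventually.of_forall fun t => by simp [Function.update_self])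
        have h2 := h1.rpow_const (p := α + 1) (Or.inr (by linarith))
        simp only [if_pos rfl]
        convert h2 using 1
        rw [hdval, Function.update_self, add_sub_cancel_right]
        rw [if_pos trivial]
        ring
      · have h1 : HasDerivAt (fun t : ℝ => Function.update e k t i / (S - e k + t))
            ((0 * (S - e k + e k) - e i * 1) / (S - e k + e k) ^ 2) (e k) := by
          have := (hasDerivAt_const (e k) (e i)).div hden (by rw [hdval]; exact hSne)
          exact this.congr_of_eventuallyEq
            (Filter.Eventually.of_forall fun t => by simp [Function.update_of_ne hik])
        have h2 := h1.rpow_const (p := α + 1) (Or.inr (by linarith))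
        simp only [if_neg hik]
        convert h2 using 1
        rw [hdval, Function.update_of_ne hik, add_sub_cancel_right]
        ring
    have hsumderiv := HasDerivAt.fun_sum (fun i (_ : i ∈ univ) => hkey i)
    refine hsumderiv.congr_deriv ?_
    -- algebra
    have hterm : ∀ i : Fin N,
        (α + 1) * (e i / S) ^ α * (if i = k then (S - e k) / S ^ 2 else -(e i) / S ^ 2)
        = (-(α + 1) / S ^ (α + 1)) * ((e i / S) * e i ^ α)
          + (if i = k then (α + 1) * e k ^ α / S ^ (α + 1) else 0) := by
      intro i
      have hrp : (e i / S) ^ α = e i ^ α / S ^ α :=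
        Real.div_rpow (le_of_lt (he i)) (le_of_lt hS0) α
      have hS1 : S ^ (α + 1) = S ^ α * S := by
        rw [Real.rpow_add hS0, Real.rpow_one]
      have hSa : (0:ℝ) < S ^ α := Real.rpow_pos_of_pos hS0 α
      by_cases hik : i = k
      · subst hik
        simp only [if_pos rfl, ↓reduceIte]
        rw [hrp, hS1]
        field_simp
        ring
      · simp only [if_neg hik]
        rw [hrp, hS1]
        field_simp
        ring
    rw [Finset.sum_congr rfl (fun i _ => hterm i), Finset.sum_add_distrib,
      Finset.sum_ite_eq' univ k, if_pos (Finset.mem_univ k), ← Finset.mul_sum]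
    ring
  · rw [mul_pos_iff_of_pos_left hc, sub_pos]
  · constructor
    · intro h
      nlinarith
    · intro h
      have : e k ^ α - ∑ i, (e i / S) * e i ^ α < 0 := by linarith
      nlinarith
end

section
/- In the finite discrete S-IntroVAE setting, for every encoder q and decoder d, the decoder objective satisfies the identity L_d(q,d) = ∑_x p_data x · log(p_data x) − KL(p_data ‖ p_d) − γ·H(p_d) − ∑_x p_data x · KL(q x ‖ post x) − γ·∑_x p_d x · KL(q x ‖ post x), where KL(q x ‖ post x) = ∑_z q x z · log(q x z / post x z), KL(p_data ‖ p_d) = ∑_x p_data x · log(p_data x / p_d x) and H(p_d) = −∑_x p_d x · log(p_d x). -/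
/-!
Bayes' rule `post = pz · d / p_d` turns `KL(q x ‖ post x)` into the ELBO gap `log p_d x − W x`,
and `p_data log p_data − p_data log (p_data / p_d) = p_data log p_d`. Substituting both into the
right-hand side leaves `∑ p_data W + γ ∑ p_d W`.
-/

open Finset Real

lemma mul_log_div_eq_sub (a : ℝ) {b : ℝ} (hb : b ≠ 0) :
    a * log (a / b) = a * log a - a * log b := by
  rcases eq_or_ne a 0 with rfl | ha
  · simp
  · rw [log_div ha hb]; ring

lemma sum_mul_log_div_bayes {Z : Type*} [Fintype Z] (prior lik q : Z → ℝ) {evidence : ℝ}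
    (hprior : ∀ z, prior z ≠ 0) (hlik : ∀ z, lik z ≠ 0) (hevidence : evidence ≠ 0)
    (hq : ∑ z, q z = 1) :
    ∑ z, q z * log (q z / (prior z * lik z / evidence)) =
      log evidence - ((∑ z, q z * log (lik z)) - ∑ z, q z * log (q z / prior z)) := by
  have hterm : ∀ z, q z * log (q z / (prior z * lik z / evidence)) =
      q z * log (q z / prior z) - q z * log (lik z) + q z * log evidence := by
    intro z
    have hpost_ne : prior z * lik z / evidence ≠ 0 :=
      div_ne_zero (mul_ne_zero (hprior z) (hlik z)) hevidence
    rw [mul_log_div_eq_sub _ hpost_ne, mul_log_div_eq_sub _ (hprior z),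
      log_div (mul_ne_zero (hprior z) (hlik z)) hevidence, log_mul (hprior z) (hlik z)]
    ring
  rw [sum_congr rfl fun z _ => hterm z, sum_add_distrib, sum_sub_distrib, ← sum_mul, hq]
  ring

theorem stmt_6_general {X Z : Type*} [Fintype X] [Fintype Z] [Nonempty Z]
    (pz : Z → ℝ) (hpz : ∀ z, 0 < pz z)
    (d : Z → X → ℝ) (hd : ∀ z x, 0 < d z x)
    (q : X → Z → ℝ) (hq_sum : ∀ x, ∑ z, q x z = 1)
    (pdata : X → ℝ)
    (γ : ℝ)
    (pd : X → ℝ) (hpd : ∀ x, pd x = ∑ z, pz z * d z x)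
    (post : X → Z → ℝ) (hpost : ∀ x z, post x z = pz z * d z x / pd x)
    (W : X → ℝ)
    (hW : ∀ x, W x = (∑ z, q x z * Real.log (d z x)) -
      ∑ z, q x z * Real.log (q x z / pz z))
    (Ld : ℝ) (hLd : Ld = (∑ x, pdata x * W x) + γ * ∑ x, pd x * W x) :
    Ld = (∑ x, pdata x * Real.log (pdata x))
      - (∑ x, pdata x * Real.log (pdata x / pd x))
      - γ * (-∑ x, pd x * Real.log (pd x))
      - (∑ x, pdata x * ∑ z, q x z * Real.log (q x z / post x z))
      - γ * ∑ x, pd x * ∑ z, q x z * Real.log (q x z / post x z) := by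
  have hpd_ne : ∀ x, pd x ≠ 0 := fun x =>
    (hpd x ▸ sum_pos (fun z _ => mul_pos (hpz z) (hd z x)) univ_nonempty).ne'
  have hW_eq : ∀ x, W x = log (pd x) - ∑ z, q x z * log (q x z / post x z) := by
    intro x
    simp only [hpost, hW]
    rw [sum_mul_log_div_bayes _ _ _ (fun z => (hpz z).ne') (fun z => (hd z x).ne') (hpd_ne x)
      (hq_sum x)]
    ring
  have hcross : (∑ x, pdata x * log (pdata x)) - ∑ x, pdata x * log (pdata x / pd x) =
      ∑ x, pdata x * log (pd x) := by
    rw [← sum_sub_distrib]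
    exact sum_congr rfl fun x _ => by rw [mul_log_div_eq_sub _ (hpd_ne x)]; ring
  simp only [hLd, hW_eq, mul_sub, sum_sub_distrib]
  linear_combination -hcross

theorem stmt_6 {X Z : Type*} [Fintype X] [Fintype Z] [Nonempty X] [Nonempty Z]
    (pz : Z → ℝ) (hpz : ∀ z, 0 < pz z) (hpz_sum : ∑ z, pz z = 1)
    (d : Z → X → ℝ) (hd : ∀ z x, 0 < d z x) (hd_sum : ∀ z, ∑ x, d z x = 1)
    (q : X → Z → ℝ) (hq : ∀ x z, 0 < q x z) (hq_sum : ∀ x, ∑ z, q x z = 1)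
    (pdata : X → ℝ) (hpdata : ∀ x, 0 < pdata x) (hpdata_sum : ∑ x, pdata x = 1)
    (α γ : ℝ) (hα : 1 ≤ α) (hγ : 0 ≤ γ)
    (pd : X → ℝ) (hpd : ∀ x, pd x = ∑ z, pz z * d z x)
    (post : X → Z → ℝ) (hpost : ∀ x z, post x z = pz z * d z x / pd x)
    (W : X → ℝ)
    (hW : ∀ x, W x = (∑ z, q x z * Real.log (d z x)) -
      ∑ z, q x z * Real.log (q x z / pz z))
    (Ld : ℝ) (hLd : Ld = (∑ x, pdata x * W x) + γ * ∑ x, pd x * W x) :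
    Ld = (∑ x, pdata x * Real.log (pdata x))
      - (∑ x, pdata x * Real.log (pdata x / pd x))
      - γ * (-∑ x, pd x * Real.log (pd x))
      - (∑ x, pdata x * ∑ z, q x z * Real.log (q x z / post x z))
      - γ * ∑ x, pd x * ∑ z, q x z * Real.log (q x z / post x z) :=
  stmt_6_general pz hpz d hd q hq_sum pdata γ pd hpd post hpost W hW Ld hLd
end

section
/- In the finite discrete S-IntroVAE setting, fix a decoder d and suppose that (p_d x)^{α+1} ≤ p_data x for every x (real power). Define the encoder q* by q* x z = post x z. Then for every encoder q, L_q(q,d) ≤ L_q(q*,d); that is, the posterior encoder globally maximizes the encoder objective. -/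
open Finset

theorem stmt_7 {X Z : Type*} [Fintype X] [Fintype Z] [Nonempty X] [Nonempty Z]
    (pz : Z → ℝ) (hpz : ∀ z, 0 < pz z) (hpz_sum : ∑ z, pz z = 1)
    (d : Z → X → ℝ) (hd : ∀ z x, 0 < d z x) (hd_sum : ∀ z, ∑ x, d z x = 1)
    (pdata : X → ℝ) (hpdata : ∀ x, 0 < pdata x) (hpdata_sum : ∑ x, pdata x = 1)
    (α γ : ℝ) (hα : 1 ≤ α) (hγ : 0 ≤ γ)
    (pd : X → ℝ) (hpd : ∀ x, pd x = ∑ z, pz z * d z x)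
    (post : X → Z → ℝ) (hpost : ∀ x z, post x z = pz z * d z x / pd x)
    (W : (X → Z → ℝ) → X → ℝ)
    (hW : ∀ (q : X → Z → ℝ) (x : X),
      W q x = (∑ z, q x z * Real.log (d z x)) -
        ∑ z, q x z * Real.log (q x z / pz z))
    (Lq : (X → Z → ℝ) → ℝ)
    (hLq : ∀ q : X → Z → ℝ,
      Lq q = (∑ x, pdata x * W q x) - (1 / α) * ∑ x, pd x * Real.exp (α * W q x))
    (hassump : ∀ x, pd x ^ (α + 1) ≤ pdata x)
    (qstar : X → Z → ℝ) (hqstar : ∀ x z, qstar x z = post x z) :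
    ∀ q : X → Z → ℝ, (∀ x z, 0 < q x z) → (∀ x, ∑ z, q x z = 1) →
      Lq q ≤ Lq qstar := by
  intro q hqpos hqsum
  have hα0 : (0:ℝ) < α := lt_of_lt_of_le one_pos hα
  have hpdpos : ∀ x, 0 < pd x := by
    intro x; rw [hpd]
    exact Finset.sum_pos (fun z _ => mul_pos (hpz z) (hd z x)) univ_nonempty
  have hpostpos : ∀ x z, 0 < post x z := by
    intro x z; rw [hpost]
    exact div_pos (mul_pos (hpz z) (hd z x)) (hpdpos x)
  have hpostsum : ∀ x, ∑ z, post x z = 1 := by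
    intro x
    simp only [hpost]
    rw [← Finset.sum_div, ← hpd x, div_self (hpdpos x).ne']
  -- key identity
  have key : ∀ (r : X → Z → ℝ) (x : X), (∀ z, 0 < r x z) →
      W r x = Real.log (pd x) * (∑ z, r x z)
        + ∑ z, r x z * Real.log (post x z / r x z) := by
    intro r x hr
    rw [hW, Finset.mul_sum, ← Finset.sum_add_distrib, ← Finset.sum_sub_distrib]
    refine Finset.sum_congr rfl fun z _ => ?_
    have h1 : Real.log (r x z / pz z) = Real.log (r x z) - Real.log (pz z) :=
      Real.log_div (hr z).ne' (hpz z).ne'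
    have h2 : Real.log (post x z / r x z)
        = Real.log (pz z) + Real.log (d z x) - Real.log (pd x) - Real.log (r x z) := by
      rw [hpost, Real.log_div (div_pos (mul_pos (hpz z) (hd z x)) (hpdpos x)).ne' (hr z).ne',
        Real.log_div (mul_pos (hpz z) (hd z x)).ne' (hpdpos x).ne',
        Real.log_mul (hpz z).ne' (hd z x).ne']
    rw [h1, h2]; ring
  have hWle : ∀ x, W q x ≤ Real.log (pd x) := by
    intro x
    rw [key q x (fun z => hqpos x z), hqsum x, mul_one]
    have hS : ∑ z, q x z * Real.log (post x z / q x z) ≤ 0 := by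
      have hb : ∀ z ∈ univ (α := Z),
          q x z * Real.log (post x z / q x z) ≤ post x z - q x z := by
        intro z _
        have hlog := Real.log_le_sub_one_of_pos (div_pos (hpostpos x z) (hqpos x z))
        calc q x z * Real.log (post x z / q x z)
            ≤ q x z * (post x z / q x z - 1) :=
              mul_le_mul_of_nonneg_left hlog (hqpos x z).le
          _ = post x z - q x z := by
              rw [mul_sub, mul_one, mul_div_cancel₀ _ (hqpos x z).ne']
      calc ∑ z, q x z * Real.log (post x z / q x z)
          ≤ ∑ z, (post x z - q x z) := Finset.sum_le_sum hb
        _ = 0 := by rw [Finset.sum_sub_distrib, hpostsum x, hqsum x]; ring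
    linarith
  have hWstar : ∀ x, W qstar x = Real.log (pd x) := by
    intro x
    have hqs : ∀ z, 0 < qstar x z := fun z => (hqstar x z) ▸ hpostpos x z
    rw [key qstar x hqs]
    have hsum : ∑ z, qstar x z = 1 := by
      simp only [hqstar]; exact hpostsum x
    have hz : ∑ z, qstar x z * Real.log (post x z / qstar x z) = 0 := by
      refine Finset.sum_eq_zero fun z _ => ?_
      rw [hqstar, div_self (hpostpos x z).ne', Real.log_one, mul_zero]
    rw [hsum, hz, mul_one, add_zero]
  have main : ∀ x, pdata x * W q x - 1 / α * (pd x * Real.exp (α * W q x)) ≤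
      pdata x * W qstar x - 1 / α * (pd x * Real.exp (α * W qstar x)) := by
    intro x
    set a := W q x with ha
    set b := W qstar x with hb
    have hab : a ≤ b := by rw [hb, hWstar x]; exact hWle x
    have hexpb : Real.exp (α * b) = pd x ^ α := by
      rw [hb, hWstar x, Real.rpow_def_of_pos (hpdpos x), mul_comm]
    have h1 : Real.exp (α * b) * (α * (a - b) + 1) ≤ Real.exp (α * a) := by
      have h := Real.add_one_le_exp (α * (a - b))
      calc Real.exp (α * b) * (α * (a - b) + 1)
          ≤ Real.exp (α * b) * Real.exp (α * (a - b)) :=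
            mul_le_mul_of_nonneg_left h (Real.exp_pos _).le
        _ = Real.exp (α * a) := by rw [← Real.exp_add]; ring_nf
    have hpow : pd x * pd x ^ α = pd x ^ (α + 1) := by
      rw [Real.rpow_add (hpdpos x), Real.rpow_one]; ring
    have step : 1 / α * (pd x * (Real.exp (α * b) - Real.exp (α * a)))
        ≤ pdata x * (b - a) := by
      have e1 : Real.exp (α * b) - Real.exp (α * a)
          ≤ Real.exp (α * b) * (α * (b - a)) := by nlinarith [h1]
      calc 1 / α * (pd x * (Real.exp (α * b) - Real.exp (α * a)))
          ≤ 1 / α * (pd x * (Real.exp (α * b) * (α * (b - a)))) := by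
            apply mul_le_mul_of_nonneg_left _ (by positivity)
            exact mul_le_mul_of_nonneg_left e1 (hpdpos x).le
        _ = pd x * Real.exp (α * b) * (b - a) := by field_simp
        _ = pd x ^ (α + 1) * (b - a) := by rw [hexpb, hpow]
        _ ≤ pdata x * (b - a) :=
            mul_le_mul_of_nonneg_right (hassump x) (by linarith)
    nlinarith [step]
  rw [hLq q, hLq qstar, Finset.mul_sum, Finset.mul_sum,
    ← Finset.sum_sub_distrib, ← Finset.sum_sub_distrib]
  exact Finset.sum_le_sum fun x _ => main x
end

section
/- In the finite discrete S-IntroVAE setting, let d* be a decoder such that for every decoder d, KL(p_data ‖ p_{d*}) + γ·H(p_{d*}) ≤ KL(p_data ‖ p_d) + γ·H(p_d), define q* x z = post_{d*} x z (the posterior of d*), and assume (p_{d*} x)^{α+1} ≤ p_data x for every x (real power). Then (q*, d*) is a Nash equilibrium of the S-IntroVAE game: for every encoder q, L_q(q, d*) ≤ L_q(q*, d*), and for every decoder d, L_d(q*, d) ≤ L_d(q*, d*). -/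
open Finset

lemma gibbs_aux {Z : Type*} [Fintype Z] (q a : Z → ℝ)
    (hq : ∀ z, 0 < q z) (ha : ∀ z, 0 < a z) (hqs : ∑ z, q z = 1) :
    ∑ z, q z * Real.log (a z / q z) ≤ Real.log (∑ z, a z) := by
  have hZ : Nonempty Z := by
    by_contra h
    rw [not_nonempty_iff] at h
    simp [Finset.univ_eq_empty] at hqs
  have hA : 0 < ∑ z, a z := Finset.sum_pos (fun z _ => ha z) univ_nonempty
  set A := ∑ z, a z with hAdef
  have key : ∀ z ∈ Finset.univ, q z * Real.log (a z / q z) ≤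
      q z * Real.log A + (a z / A - q z) := by
    intro z _
    have h1 : 0 < a z / (q z * A) := div_pos (ha z) (mul_pos (hq z) hA)
    have h2 := Real.log_le_sub_one_of_pos h1
    have h3 : Real.log (a z / (q z * A)) = Real.log (a z / q z) - Real.log A := by
      rw [Real.log_div (ne_of_gt (ha z)) (ne_of_gt (mul_pos (hq z) hA)),
        Real.log_div (ne_of_gt (ha z)) (ne_of_gt (hq z)),
        Real.log_mul (ne_of_gt (hq z)) (ne_of_gt hA)]
      ring
    have h4 : q z * (Real.log (a z / q z) - Real.log A) ≤ q z * (a z / (q z * A) - 1) := by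
      rw [← h3]; exact mul_le_mul_of_nonneg_left h2 (le_of_lt (hq z))
    have h5 : q z * (a z / (q z * A) - 1) = a z / A - q z := by
      field_simp [(hq z).ne', hA.ne']
    nlinarith [h4, h5]
  have hs := Finset.sum_le_sum key
  have hsum2 : ∑ z, (q z * Real.log A + (a z / A - q z)) = Real.log A := by
    rw [Finset.sum_add_distrib, ← Finset.sum_mul, hqs, Finset.sum_sub_distrib,
      ← Finset.sum_div, hqs, ← hAdef]
    field_simp
    ring
  linarith [hs, le_of_eq hsum2]

theorem stmt_8 {X Z : Type*} [Fintype X] [Fintype Z] [Nonempty X] [Nonempty Z]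
    (pz : Z → ℝ) (hpz : ∀ z, 0 < pz z) (hpz_sum : ∑ z, pz z = 1)
    (pdata : X → ℝ) (hpdata : ∀ x, 0 < pdata x) (hpdata_sum : ∑ x, pdata x = 1)
    (α γ : ℝ) (hα : 1 ≤ α) (hγ : 0 ≤ γ)
    (pd : (Z → X → ℝ) → X → ℝ)
    (hpd : ∀ (d : Z → X → ℝ) (x : X), pd d x = ∑ z, pz z * d z x)
    (post : (Z → X → ℝ) → X → Z → ℝ)
    (hpost : ∀ (d : Z → X → ℝ) (x : X) (z : Z),
      post d x z = pz z * d z x / pd d x)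
    (W : (X → Z → ℝ) → (Z → X → ℝ) → X → ℝ)
    (hW : ∀ (q : X → Z → ℝ) (d : Z → X → ℝ) (x : X),
      W q d x = (∑ z, q x z * Real.log (d z x)) -
        ∑ z, q x z * Real.log (q x z / pz z))
    (Lq : (X → Z → ℝ) → (Z → X → ℝ) → ℝ)
    (hLq : ∀ (q : X → Z → ℝ) (d : Z → X → ℝ),
      Lq q d = (∑ x, pdata x * W q d x) -
        (1 / α) * ∑ x, pd d x * Real.exp (α * W q d x))
    (Ld : (X → Z → ℝ) → (Z → X → ℝ) → ℝ)
    (hLd : ∀ (q : X → Z → ℝ) (d : Z → X → ℝ),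
      Ld q d = (∑ x, pdata x * W q d x) + γ * ∑ x, pd d x * W q d x)
    (KL : (Z → X → ℝ) → ℝ)
    (hKL : ∀ d : Z → X → ℝ, KL d = ∑ x, pdata x * Real.log (pdata x / pd d x))
    (Hent : (Z → X → ℝ) → ℝ)
    (hHent : ∀ d : Z → X → ℝ, Hent d = -∑ x, pd d x * Real.log (pd d x))
    (dstar : Z → X → ℝ)
    (hdstar_pos : ∀ z x, 0 < dstar z x) (hdstar_sum : ∀ z, ∑ x, dstar z x = 1)
    (hdstar_opt : ∀ d : Z → X → ℝ, (∀ z x, 0 < d z x) → (∀ z, ∑ x, d z x = 1) →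
      KL dstar + γ * Hent dstar ≤ KL d + γ * Hent d)
    (qstar : X → Z → ℝ) (hqstar : ∀ x z, qstar x z = post dstar x z)
    (hassump : ∀ x, pd dstar x ^ (α + 1) ≤ pdata x) :
    (∀ q : X → Z → ℝ, (∀ x z, 0 < q x z) → (∀ x, ∑ z, q x z = 1) →
      Lq q dstar ≤ Lq qstar dstar) ∧
    (∀ d : Z → X → ℝ, (∀ z x, 0 < d z x) → (∀ z, ∑ x, d z x = 1) →
      Ld qstar d ≤ Ld qstar dstar) := by
  -- positivity of marginals
  have hpd_pos : ∀ (d : Z → X → ℝ), (∀ z x, 0 < d z x) → ∀ x, 0 < pd d x := by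
    intro d hd x
    rw [hpd]
    exact Finset.sum_pos (fun z _ => mul_pos (hpz z) (hd z x)) univ_nonempty
  have hc : ∀ x, 0 < pd dstar x := hpd_pos dstar hdstar_pos
  -- qstar is a positive normalized encoder
  have hqpos : ∀ x z, 0 < qstar x z := by
    intro x z
    rw [hqstar, hpost]
    exact div_pos (mul_pos (hpz z) (hdstar_pos z x)) (hc x)
  have hqsum : ∀ x, ∑ z, qstar x z = 1 := by
    intro x
    simp only [hqstar, hpost]
    rw [← Finset.sum_div, ← hpd, div_self (ne_of_gt (hc x))]
  -- rewrite W
  have hWform : ∀ (q : X → Z → ℝ), (∀ x z, 0 < q x z) → ∀ (d : Z → X → ℝ),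
      (∀ z x, 0 < d z x) → ∀ x,
      W q d x = ∑ z, q x z * Real.log (pz z * d z x / q x z) := by
    intro q hq d hd x
    rw [hW, ← Finset.sum_sub_distrib]
    refine Finset.sum_congr rfl fun z _ => ?_
    rw [Real.log_div (ne_of_gt (mul_pos (hpz z) (hd z x))) (ne_of_gt (hq x z)),
      Real.log_mul (ne_of_gt (hpz z)) (ne_of_gt (hd z x)),
      Real.log_div (ne_of_gt (hq x z)) (ne_of_gt (hpz z))]
    ring
  have hWle : ∀ (q : X → Z → ℝ), (∀ x z, 0 < q x z) → (∀ x, ∑ z, q x z = 1) →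
      ∀ (d : Z → X → ℝ), (∀ z x, 0 < d z x) → ∀ x, W q d x ≤ Real.log (pd d x) := by
    intro q hq hqs d hd x
    rw [hWform q hq d hd x, hpd]
    exact gibbs_aux (fun z => q x z) (fun z => pz z * d z x) (fun z => hq x z)
      (fun z => mul_pos (hpz z) (hd z x)) (hqs x)
  have hWstar : ∀ x, W qstar dstar x = Real.log (pd dstar x) := by
    intro x
    rw [hWform qstar hqpos dstar hdstar_pos x]
    have hterm : ∀ z, pz z * dstar z x / qstar x z = pd dstar x := by
      intro z
      rw [hqstar, hpost]
      rw [div_div_eq_mul_div, mul_comm, mul_div_assoc,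
        div_self (ne_of_gt (mul_pos (hpz z) (hdstar_pos z x))), mul_one]
    rw [show (∑ z, qstar x z * Real.log (pz z * dstar z x / qstar x z)) =
        ∑ z, qstar x z * Real.log (pd dstar x) from
      Finset.sum_congr rfl (fun z _ => by rw [hterm z])]
    rw [← Finset.sum_mul, hqsum x, one_mul]
  constructor
  · -- encoder part
    intro q hq hqs
    rw [hLq, hLq]
    have hα0 : 0 < α := lt_of_lt_of_le one_pos hα
    have e1 : ∀ (q' : X → Z → ℝ),
        (∑ x, pdata x * W q' dstar x) - (1/α) * ∑ x, pd dstar x * Real.exp (α * W q' dstar x)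
        = ∑ x, (pdata x * W q' dstar x - (1/α) * (pd dstar x * Real.exp (α * W q' dstar x))) := by
      intro q'
      rw [Finset.mul_sum, ← Finset.sum_sub_distrib]
    rw [e1 q, e1 qstar]
    refine Finset.sum_le_sum fun x _ => ?_
    set w := W q dstar x with hwdef
    set w' := W qstar dstar x with hw'def
    have hle : w ≤ w' := by
      rw [hw'def, hWstar x]
      exact hWle q hq hqs dstar hdstar_pos x
    have hcb : pd dstar x * Real.exp (α * w') ≤ pdata x := by
      rw [hw'def, hWstar x]
      have hx : Real.exp (α * Real.log (pd dstar x)) = pd dstar x ^ α := by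
        rw [Real.rpow_def_of_pos (hc x)]
        ring_nf
      rw [hx]
      calc pd dstar x * pd dstar x ^ α = pd dstar x ^ (α + 1) := by
            rw [Real.rpow_add (hc x), Real.rpow_one]; ring
        _ ≤ pdata x := hassump x
    have hE : Real.exp (α * w') * (α * (w - w') + 1) ≤ Real.exp (α * w) := by
      have h0 := Real.add_one_le_exp (α * (w - w'))
      have h2 : Real.exp (α * (w - w')) = Real.exp (α * w) / Real.exp (α * w') := by
        rw [← Real.exp_sub]; ring_nf
      rw [h2] at h0
      have he : (0:ℝ) < Real.exp (α * w') := Real.exp_pos _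
      calc Real.exp (α * w') * (α * (w - w') + 1)
          ≤ Real.exp (α * w') * (Real.exp (α * w) / Real.exp (α * w')) :=
            mul_le_mul_of_nonneg_left h0 he.le
        _ = Real.exp (α * w) := by field_simp
    have hgoal : (1/α) * (pd dstar x * (Real.exp (α * w') - Real.exp (α * w)))
        ≤ pdata x * (w' - w) := by
      have h1 : pd dstar x * (Real.exp (α * w') - Real.exp (α * w))
          ≤ pd dstar x * (Real.exp (α * w') * (α * (w' - w))) := by
        apply mul_le_mul_of_nonneg_left _ (hc x).le
        nlinarith [hE]
      have h3 : (pd dstar x * Real.exp (α * w')) * (α * (w' - w))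
          ≤ pdata x * (α * (w' - w)) := by
        apply mul_le_mul_of_nonneg_right hcb
        have : 0 ≤ w' - w := by linarith
        positivity
      calc (1/α) * (pd dstar x * (Real.exp (α * w') - Real.exp (α * w)))
          ≤ (1/α) * (pdata x * (α * (w' - w))) := by
            apply mul_le_mul_of_nonneg_left _ (by positivity)
            nlinarith [h1, h3]
        _ = pdata x * (w' - w) := by field_simp
    linarith
  · -- decoder part
    intro d hd hds
    have hpdd : ∀ x, 0 < pd d x := hpd_pos d hd
    have hWled := hWle qstar hqpos hqsum d hd
    have hlogsplit : ∀ (d' : Z → X → ℝ), (∀ x, 0 < pd d' x) →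
        ∑ x, pdata x * Real.log (pd d' x)
          = (∑ x, pdata x * Real.log (pdata x)) - KL d' := by
      intro d' hp
      rw [hKL, ← Finset.sum_sub_distrib]
      refine Finset.sum_congr rfl fun x _ => ?_
      rw [Real.log_div (ne_of_gt (hpdata x)) (ne_of_gt (hp x))]
      ring
    rw [hLd, hLd]
    have h1 : ∑ x, pdata x * W qstar d x ≤ ∑ x, pdata x * Real.log (pd d x) :=
      Finset.sum_le_sum fun x _ => mul_le_mul_of_nonneg_left (hWled x) (hpdata x).le
    have h2 : ∑ x, pd d x * W qstar d x ≤ ∑ x, pd d x * Real.log (pd d x) :=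
      Finset.sum_le_sum fun x _ => mul_le_mul_of_nonneg_left (hWled x) (hpdd x).le
    have h1' : ∑ x, pdata x * W qstar dstar x
        = (∑ x, pdata x * Real.log (pdata x)) - KL dstar := by
      rw [show (∑ x, pdata x * W qstar dstar x) = ∑ x, pdata x * Real.log (pd dstar x) from
        Finset.sum_congr rfl (fun x _ => by rw [hWstar x])]
      exact hlogsplit dstar hc
    have h2' : ∑ x, pd dstar x * W qstar dstar x = - Hent dstar := by
      rw [hHent, show (∑ x, pd dstar x * W qstar dstar x)
          = ∑ x, pd dstar x * Real.log (pd dstar x) from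
        Finset.sum_congr rfl (fun x _ => by rw [hWstar x])]
      exact (neg_neg _).symm
    have hopt := hdstar_opt d hd hds
    have hg2 : γ * ∑ x, pd d x * W qstar d x ≤ γ * ∑ x, pd d x * Real.log (pd d x) :=
      mul_le_mul_of_nonneg_left h2 hγ
    have hH : ∑ x, pd d x * Real.log (pd d x) = - Hent d := by rw [hHent]; ring
    have hKLd := hlogsplit d hpdd
    rw [h1', h2']
    rw [hH] at hg2
    linarith [h1, hg2, hKLd]
end

section
/- In the finite discrete S-IntroVAE setting with a learnable prior, let (pλ*, d*) be a prior–decoder pair such that for every prior pλ and decoder d, KL(p_data ‖ p^{λ*}_{d*}) + γ·H(p^{λ*}_{d*}) ≤ KL(p_data ‖ p^{λ}_{d}) + γ·H(p^{λ}_{d}), define q* x z = pλ* z · d* z x / p^{λ*}_{d*} x (the posterior under (pλ*, d*)), and assume (p^{λ*}_{d*} x)^{α+1} ≤ p_data x for every x (real power). Then, when the prior player cooperates with the decoder player (both maximizing the decoder objective), the triplet (pλ*, q*, d*) is a Nash equilibrium: for every encoder q, L_q(pλ*, q, d*) ≤ L_q(pλ*, q*, d*), and for every prior pλ and decoder d,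 L_d(pλ, q*, d) ≤ L_d(pλ*, q*, d*). -/
open Finset

theorem stmt_9 {X Z : Type*} [Fintype X] [Fintype Z] [Nonempty X] [Nonempty Z]
    (pdata : X → ℝ) (hpdata : ∀ x, 0 < pdata x) (hpdata_sum : ∑ x, pdata x = 1)
    (α γ : ℝ) (hα : 1 ≤ α) (hγ : 0 ≤ γ)
    (pd : (Z → ℝ) → (Z → X → ℝ) → X → ℝ)
    (hpd : ∀ (pl : Z → ℝ) (d : Z → X → ℝ) (x : X),
      pd pl d x = ∑ z, pl z * d z x)
    (W : (Z → ℝ) → (X → Z → ℝ) → (Z → X → ℝ) → X → ℝ)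
    (hW : ∀ (pl : Z → ℝ) (q : X → Z → ℝ) (d : Z → X → ℝ) (x : X),
      W pl q d x = (∑ z, q x z * Real.log (d z x)) -
        ∑ z, q x z * Real.log (q x z / pl z))
    (Lq : (Z → ℝ) → (X → Z → ℝ) → (Z → X → ℝ) → ℝ)
    (hLq : ∀ (pl : Z → ℝ) (q : X → Z → ℝ) (d : Z → X → ℝ),
      Lq pl q d = (∑ x, pdata x * W pl q d x) -
        (1 / α) * ∑ x, pd pl d x * Real.exp (α * W pl q d x))
    (Ld : (Z → ℝ) → (X → Z → ℝ) → (Z → X → ℝ) → ℝ)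
    (hLd : ∀ (pl : Z → ℝ) (q : X → Z → ℝ) (d : Z → X → ℝ),
      Ld pl q d = (∑ x, pdata x * W pl q d x) + γ * ∑ x, pd pl d x * W pl q d x)
    (KL : (X → ℝ) → ℝ)
    (hKL : ∀ p : X → ℝ, KL p = ∑ x, pdata x * Real.log (pdata x / p x))
    (Hent : (X → ℝ) → ℝ)
    (hHent : ∀ p : X → ℝ, Hent p = -∑ x, p x * Real.log (p x))
    (plstar : Z → ℝ) (hplstar_pos : ∀ z, 0 < plstar z)
    (hplstar_sum : ∑ z, plstar z = 1)
    (dstar : Z → X → ℝ)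
    (hdstar_pos : ∀ z x, 0 < dstar z x) (hdstar_sum : ∀ z, ∑ x, dstar z x = 1)
    (hopt : ∀ (pl : Z → ℝ) (d : Z → X → ℝ),
      (∀ z, 0 < pl z) → (∑ z, pl z = 1) →
      (∀ z x, 0 < d z x) → (∀ z, ∑ x, d z x = 1) →
      KL (pd plstar dstar) + γ * Hent (pd plstar dstar) ≤
        KL (pd pl d) + γ * Hent (pd pl d))
    (qstar : X → Z → ℝ)
    (hqstar : ∀ x z, qstar x z = plstar z * dstar z x / pd plstar dstar x)
    (hassump : ∀ x, pd plstar dstar x ^ (α + 1) ≤ pdata x) :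
    (∀ q : X → Z → ℝ, (∀ x z, 0 < q x z) → (∀ x, ∑ z, q x z = 1) →
      Lq plstar q dstar ≤ Lq plstar qstar dstar) ∧
    (∀ (pl : Z → ℝ) (d : Z → X → ℝ),
      (∀ z, 0 < pl z) → (∑ z, pl z = 1) →
      (∀ z x, 0 < d z x) → (∀ z, ∑ x, d z x = 1) →
      Ld pl qstar d ≤ Ld plstar qstar dstar) := by
  have hα0 : (0:ℝ) < α := lt_of_lt_of_le one_pos hα
  have hpd_pos : ∀ (pl : Z → ℝ) (d : Z → X → ℝ), (∀ z, 0 < pl z) → (∀ z x, 0 < d z x) →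
      ∀ x, 0 < pd pl d x := by
    intro pl d hpl hd x
    rw [hpd]
    exact Finset.sum_pos (fun z _ => mul_pos (hpl z) (hd z x)) univ_nonempty
  have hW' : ∀ (pl : Z → ℝ) (q : X → Z → ℝ) (d : Z → X → ℝ) (x : X),
      (∀ z, 0 < pl z) → (∀ z, 0 < d z x) → (∀ z, 0 < q x z) →
      W pl q d x = ∑ z, q x z * Real.log (pl z * d z x / q x z) := by
    intro pl q d x hpl hd hq
    rw [hW, ← Finset.sum_sub_distrib]
    refine Finset.sum_congr rfl (fun z _ => ?_)
    rw [← mul_sub]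
    congr 1
    rw [Real.log_div (ne_of_gt (mul_pos (hpl z) (hd z))) (ne_of_gt (hq z)),
        Real.log_div (ne_of_gt (hq z)) (ne_of_gt (hpl z)),
        Real.log_mul (ne_of_gt (hpl z)) (ne_of_gt (hd z))]
    ring
  have hELBO : ∀ (pl : Z → ℝ) (q : X → Z → ℝ) (d : Z → X → ℝ) (x : X),
      (∀ z, 0 < pl z) → (∀ z x, 0 < d z x) → (∀ x z, 0 < q x z) → (∑ z, q x z = 1) →
      W pl q d x ≤ Real.log (pd pl d x) := by
    intro pl q d x hpl hd hq hqsum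
    have hb : 0 < pd pl d x := hpd_pos pl d hpl hd x
    rw [hW' pl q d x hpl (fun z => hd z x) (fun z => hq x z)]
    have key : ∀ z : Z, q x z * Real.log (pl z * d z x / q x z) ≤
        q x z * Real.log (pd pl d x) + (pl z * d z x / pd pl d x - q x z) := by
      intro z
      have hq0 : 0 < q x z := hq x z
      have hp0 : 0 < pl z := hpl z
      have hd0 : 0 < d z x := hd z x
      have h1 : Real.log (pl z * d z x / q x z / pd pl d x) ≤
          pl z * d z x / q x z / pd pl d x - 1 :=
        Real.log_le_sub_one_of_pos (by positivity)
      have h2 : Real.log (pl z * d z x / q x z / pd pl d x) =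
          Real.log (pl z * d z x / q x z) - Real.log (pd pl d x) :=
        Real.log_div (by positivity) (ne_of_gt hb)
      have h3 := mul_le_mul_of_nonneg_left (h2 ▸ h1) (le_of_lt (hq x z))
      have h4 : q x z * (pl z * d z x / q x z / pd pl d x - 1)
          = pl z * d z x / pd pl d x - q x z := by
        field_simp
      rw [mul_sub, h4] at h3
      linarith
    calc ∑ z, q x z * Real.log (pl z * d z x / q x z)
        ≤ ∑ z, (q x z * Real.log (pd pl d x) + (pl z * d z x / pd pl d x - q x z)) :=
          Finset.sum_le_sum (fun z _ => key z)
      _ = Real.log (pd pl d x) := by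
          rw [Finset.sum_add_distrib, ← Finset.sum_mul, hqsum, Finset.sum_sub_distrib,
              ← Finset.sum_div, ← hpd, hqsum, div_self (ne_of_gt hb)]
          ring
  have hpdstar_pos : ∀ x, 0 < pd plstar dstar x := hpd_pos plstar dstar hplstar_pos hdstar_pos
  have hqstar_pos : ∀ x z, 0 < qstar x z := by
    intro x z
    rw [hqstar]
    exact div_pos (mul_pos (hplstar_pos z) (hdstar_pos z x)) (hpdstar_pos x)
  have hqstar_sum : ∀ x, ∑ z, qstar x z = 1 := by
    intro x
    have h : ∑ z, qstar x z = (∑ z, plstar z * dstar z x) / pd plstar dstar x := by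
      rw [Finset.sum_div]
      exact Finset.sum_congr rfl (fun z _ => hqstar x z)
    rw [h, ← hpd, div_self (ne_of_gt (hpdstar_pos x))]
  have hWstar : ∀ x, W plstar qstar dstar x = Real.log (pd plstar dstar x) := by
    intro x
    rw [hW' plstar qstar dstar x hplstar_pos (fun z => hdstar_pos z x) (fun z => hqstar_pos x z)]
    have h : ∀ z : Z, qstar x z * Real.log (plstar z * dstar z x / qstar x z)
        = qstar x z * Real.log (pd plstar dstar x) := by
      intro z
      congr 1
      rw [hqstar]
      have hp0 : 0 < plstar z := hplstar_pos z
      have hd0 : 0 < dstar z x := hdstar_pos z x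
      have hb0 : 0 < pd plstar dstar x := hpdstar_pos x
      field_simp
    rw [Finset.sum_congr rfl (fun z _ => h z), ← Finset.sum_mul, hqstar_sum, one_mul]
  constructor
  · intro q hq hqsum
    have hform : ∀ (q' : X → Z → ℝ), Lq plstar q' dstar =
        ∑ x, (pdata x * W plstar q' dstar x -
          (1/α) * (pd plstar dstar x * Real.exp (α * W plstar q' dstar x))) := by
      intro q'
      rw [hLq, Finset.mul_sum, ← Finset.sum_sub_distrib]
    rw [hform, hform]
    apply Finset.sum_le_sum
    intro x _
    rw [hWstar x]
    set a := pdata x with ha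
    set b := pd plstar dstar x with hbdef
    set w := W plstar q dstar x with hwdef
    have hb : 0 < b := hpdstar_pos x
    have hwle : w ≤ Real.log b := hELBO plstar q dstar x hplstar_pos hdstar_pos hq (hqsum x)
    set t := Real.exp (α * Real.log b) with htdef
    set s := Real.exp (α * w) with hsdef
    have e1 : t * (α * (w - Real.log b) + 1) ≤ s := by
      calc t * (α * (w - Real.log b) + 1)
          ≤ t * Real.exp (α * (w - Real.log b)) :=
            mul_le_mul_of_nonneg_left (Real.add_one_le_exp _) (Real.exp_pos _).le
        _ = s := by rw [htdef, hsdef, ← Real.exp_add]; ring_nf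
    have e2 : b * t = b ^ (α + 1) := by
      rw [htdef, Real.rpow_add_one (ne_of_gt hb), Real.rpow_def_of_pos hb]
      ring
    have e3 : b * t ≤ a := by rw [e2]; exact hassump x
    have key : b * t - b * s ≤ α * (a * (Real.log b - w)) := by
      nlinarith [mul_le_mul_of_nonneg_left e1 hb.le,
        mul_nonneg (mul_nonneg hα0.le (sub_nonneg.2 e3)) (sub_nonneg.2 hwle)]
    have key2 : (1/α) * (b * t - b * s) ≤ a * (Real.log b - w) := by
      rw [one_div]
      calc α⁻¹ * (b * t - b * s) ≤ α⁻¹ * (α * (a * (Real.log b - w))) :=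
            mul_le_mul_of_nonneg_left key (inv_nonneg.2 hα0.le)
        _ = a * (Real.log b - w) := by field_simp
    nlinarith [key2]
  · intro pl d hpl hplsum hd hdsum
    have hb' : ∀ x, 0 < pd pl d x := hpd_pos pl d hpl hd
    have h1 : Ld pl qstar d ≤ (∑ x, pdata x * Real.log (pd pl d x)) +
        γ * ∑ x, pd pl d x * Real.log (pd pl d x) := by
      rw [hLd]
      apply add_le_add
      · exact Finset.sum_le_sum fun x _ => mul_le_mul_of_nonneg_left
          (hELBO pl qstar d x hpl hd hqstar_pos (hqstar_sum x)) (hpdata x).le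
      · exact mul_le_mul_of_nonneg_left (Finset.sum_le_sum fun x _ =>
          mul_le_mul_of_nonneg_left
            (hELBO pl qstar d x hpl hd hqstar_pos (hqstar_sum x)) (hb' x).le) hγ
    have h2 : Ld plstar qstar dstar = (∑ x, pdata x * Real.log (pd plstar dstar x)) +
        γ * ∑ x, pd plstar dstar x * Real.log (pd plstar dstar x) := by
      rw [hLd]
      simp only [hWstar]
    have h3 : ∀ (p : X → ℝ), (∀ x, 0 < p x) →
        KL p + γ * Hent p = (∑ x, pdata x * Real.log (pdata x)) -
          ((∑ x, pdata x * Real.log (p x)) + γ * ∑ x, p x * Real.log (p x)) := by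
      intro p hp
      rw [hKL, hHent]
      have h : ∀ x : X, pdata x * Real.log (pdata x / p x)
          = pdata x * Real.log (pdata x) - pdata x * Real.log (p x) := by
        intro x
        rw [Real.log_div (ne_of_gt (hpdata x)) (ne_of_gt (hp x))]
        ring
      rw [Finset.sum_congr rfl (fun x _ => h x), Finset.sum_sub_distrib]
      ring
    have hcmp := hopt pl d hpl hplsum hd hdsum
    rw [h3 _ hpdstar_pos, h3 _ hb'] at hcmp
    linarith
end

section
/- In the finite discrete S-IntroVAE setting with a learnable prior, fix a prior pλ and decoder d, and let q* be the posterior encoder q* x z = pλ z · d z x / p^{λ}_{d} x. Then the encoder objective evaluated at q* satisfies the identity L_q(pλ, q*, d) = −KL(p_data ‖ p^{λ}_{d}) + ∑_x p_data x · log(p_data x) − (1/α)·∑_x (p^{λ}_{d} x)^{α+1}, where KL(p_data ‖ p^{λ}_{d}) = ∑_x p_data x · log(p_data x / p^{λ}_{d} x) and the power is a real power. -/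
/-! At the exact posterior the ELBO is tight, `W x = log p(x)`, so the penalty term
`p(x) · exp(α W x)` collapses to `p(x)^(α+1)`, and `∑ p_data · log p` splits into
the negative KL divergence plus the negative entropy of `p_data`. -/

open Finset

section Posterior

variable {Z : Type*} [Fintype Z] {prior lik : Z → ℝ}

theorem sum_mul_pos_of_pos [Nonempty Z] (hprior : ∀ z, 0 < prior z) (hlik : ∀ z, 0 < lik z) :
    0 < ∑ z, prior z * lik z :=
  sum_pos (fun z _ => mul_pos (hprior z) (hlik z)) univ_nonempty

theorem elbo_posterior_eq_log_evidence [Nonempty Z]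
    (hprior : ∀ z, 0 < prior z) (hlik : ∀ z, 0 < lik z)
    {evidence : ℝ} (hev : evidence = ∑ z, prior z * lik z)
    {q : Z → ℝ} (hq : ∀ z, q z = prior z * lik z / evidence) :
    (∑ z, q z * Real.log (lik z)) - ∑ z, q z * Real.log (q z / prior z)
      = Real.log evidence := by
  have hev_pos : 0 < evidence := hev ▸ sum_mul_pos_of_pos hprior hlik
  have hq_sum : ∑ z, q z = 1 := by
    simp only [hq, ← sum_div, ← hev, div_self hev_pos.ne']
  have hlog_ratio : ∀ z, Real.log (q z / prior z) = Real.log (lik z) - Real.log evidence := by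
    intro z
    rw [hq, mul_div_assoc, mul_div_cancel_left₀ _ (hprior z).ne',
      Real.log_div (hlik z).ne' hev_pos.ne']
  simp only [hlog_ratio, mul_sub, sum_sub_distrib, ← sum_mul, hq_sum]
  ring

end Posterior

theorem mul_exp_mul_log_eq_rpow {p : ℝ} (hp : 0 < p) (α : ℝ) :
    p * Real.exp (α * Real.log p) = p ^ (α + 1) := by
  rw [mul_comm α, ← Real.rpow_def_of_pos hp, Real.rpow_add hp, Real.rpow_one, mul_comm]

theorem mul_log_eq_neg_mul_log_div_add_mul_log {a b : ℝ} (ha : 0 < a) (hb : 0 < b) :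
    a * Real.log b = -(a * Real.log (a / b)) + a * Real.log a := by
  rw [Real.log_div ha.ne' hb.ne']
  ring

theorem stmt_10_general {X Z : Type*} [Fintype X] [Fintype Z] [Nonempty Z]
    (pl : Z → ℝ) (hpl : ∀ z, 0 < pl z)
    (d : Z → X → ℝ) (hd : ∀ z x, 0 < d z x)
    (pdata : X → ℝ) (hpdata : ∀ x, 0 < pdata x)
    (α : ℝ)
    (pd : X → ℝ) (hpd : ∀ x, pd x = ∑ z, pl z * d z x)
    (qstar : X → Z → ℝ) (hqstar : ∀ x z, qstar x z = pl z * d z x / pd x)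
    (W : X → ℝ)
    (hW : ∀ x, W x = (∑ z, qstar x z * Real.log (d z x)) -
      ∑ z, qstar x z * Real.log (qstar x z / pl z))
    (Lq : ℝ)
    (hLq : Lq = (∑ x, pdata x * W x) - (1 / α) * ∑ x, pd x * Real.exp (α * W x)) :
    Lq = -(∑ x, pdata x * Real.log (pdata x / pd x))
      + (∑ x, pdata x * Real.log (pdata x))
      - (1 / α) * ∑ x, pd x ^ (α + 1) := by
  have hpd_pos : ∀ x, 0 < pd x := fun x => hpd x ▸ sum_mul_pos_of_pos hpl (hd · x)
  have hW_log : ∀ x, W x = Real.log (pd x) := fun x =>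
    (hW x).trans (elbo_posterior_eq_log_evidence hpl (hd · x) (hpd x) (hqstar x))
  simp only [hLq, hW_log, mul_exp_mul_log_eq_rpow (hpd_pos _),
    mul_log_eq_neg_mul_log_div_add_mul_log (hpdata _) (hpd_pos _),
    sum_add_distrib, sum_neg_distrib]

theorem stmt_10 {X Z : Type*} [Fintype X] [Fintype Z] [Nonempty X] [Nonempty Z]
    (pl : Z → ℝ) (hpl : ∀ z, 0 < pl z) (hpl_sum : ∑ z, pl z = 1)
    (d : Z → X → ℝ) (hd : ∀ z x, 0 < d z x) (hd_sum : ∀ z, ∑ x, d z x = 1)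
    (pdata : X → ℝ) (hpdata : ∀ x, 0 < pdata x) (hpdata_sum : ∑ x, pdata x = 1)
    (α : ℝ) (hα : 1 ≤ α)
    (pd : X → ℝ) (hpd : ∀ x, pd x = ∑ z, pl z * d z x)
    (qstar : X → Z → ℝ) (hqstar : ∀ x z, qstar x z = pl z * d z x / pd x)
    (W : X → ℝ)
    (hW : ∀ x, W x = (∑ z, qstar x z * Real.log (d z x)) -
      ∑ z, qstar x z * Real.log (qstar x z / pl z))
    (Lq : ℝ)
    (hLq : Lq = (∑ x, pdata x * W x) - (1 / α) * ∑ x, pd x * Real.exp (α * W x)) :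
    Lq = -(∑ x, pdata x * Real.log (pdata x / pd x))
      + (∑ x, pdata x * Real.log (pdata x))
      - (1 / α) * ∑ x, pd x ^ (α + 1) :=
  stmt_10_general pl hpl d hd pdata hpdata α pd hpd qstar hqstar W hW Lq hLq
end

section
/- Let M be a positive natural number, let e : Fin M → ℝ satisfy e i > 0 for all i, let μ : Fin M → ℝ and σ : Fin M → ℝ with σ i > 0 for all i, fix z ∈ ℝ and an index k, and define φ(z; μ, σ) = (σ·√(2π))⁻¹ · exp(−(z − μ)²/(2σ²)), S = ∑_l e l, and w l = e l / S. Then the function t ↦ −log( ∑_l (Function.update e k t l / ∑_j Function.update e k t j) · φ(z; μ l, σ l) ) has derivative at t = e k equal to ( ∑_l w l · φ(z; μ l, σ l) − φ(z; μ k, σ k) ) / ( ∑_l e l · φ(z; μ l, σ l) ). -/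
open Finset

theorem stmt_17 (M : ℕ) (hM : 0 < M)
    (e : Fin M → ℝ) (he : ∀ i, 0 < e i)
    (μ σ : Fin M → ℝ) (hσ : ∀ i, 0 < σ i)
    (z : ℝ) (k : Fin M)
    (φ : ℝ → ℝ → ℝ → ℝ)
    (hφ : ∀ z m s, φ z m s =
      (s * Real.sqrt (2 * Real.pi))⁻¹ * Real.exp (-(z - m) ^ 2 / (2 * s ^ 2)))
    (S : ℝ) (hS : S = ∑ l, e l)
    (w : Fin M → ℝ) (hw : ∀ l, w l = e l / S) :
    HasDerivAt
      (fun t => -Real.log (∑ l,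
        (Function.update e k t l / ∑ j, Function.update e k t j) *
          φ z (μ l) (σ l)))
      (((∑ l, w l * φ z (μ l) (σ l)) - φ z (μ k) (σ k)) /
        (∑ l, e l * φ z (μ l) (σ l))) (e k) := by
  set ψ : Fin M → ℝ := fun l => φ z (μ l) (σ l) with hψ
  have hψpos : ∀ l, 0 < ψ l := by
    intro l
    have hs := hσ l
    rw [hψ]; simp only []
    rw [hφ]
    positivity
  set A : ℝ := ∑ l ∈ univ.erase k, e l * ψ l with hA
  set B : ℝ := ∑ l ∈ univ.erase k, e l with hB
  set C : ℝ := ∑ l, e l * ψ l with hC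
  have hCk : C = e k * ψ k + A := (Finset.add_sum_erase univ (fun l => e l * ψ l) (mem_univ k)).symm
  have hSk : S = e k + B := by rw [hS]; exact (Finset.add_sum_erase univ e (mem_univ k)).symm
  have hCpos : 0 < C := Finset.sum_pos (fun l _ => mul_pos (he l) (hψpos l)) ⟨k, mem_univ k⟩
  have hSpos : 0 < S := by rw [hS]; exact Finset.sum_pos (fun l _ => he l) ⟨k, mem_univ k⟩
  have hfe : (fun t => -Real.log (∑ l,
        (Function.update e k t l / ∑ j, Function.update e k t j) * ψ l))
      = fun t => -Real.log ((A + t * ψ k) / (B + t)) := by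
    funext t
    have h1 : (∑ j, Function.update e k t j) = B + t := by
      rw [Finset.sum_update_of_mem (mem_univ k), Finset.sdiff_singleton_eq_erase]; ring
    have h2 : (∑ l, Function.update e k t l * ψ l) = A + t * ψ k := by
      rw [show (∑ l, Function.update e k t l * ψ l)
          = ∑ l, Function.update (fun l => e l * ψ l) k (t * ψ k) l from ?_,
        Finset.sum_update_of_mem (mem_univ k), Finset.sdiff_singleton_eq_erase]
      · ring
      · apply Finset.sum_congr rfl
        intro l _
        by_cases h : l = k
        · subst h; simp
        · simp [Function.update_of_ne h]
    have h3 : (∑ l, Function.update e k t l / (∑ j, Function.update e k t j) * ψ l)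
        = (A + t * ψ k) / (B + t) := by
      rw [h1, ← h2, Finset.sum_div]
      exact Finset.sum_congr rfl fun l _ => by ring
    rw [h3]
  rw [hfe]
  have hnum : HasDerivAt (fun t : ℝ => A + t * ψ k) (ψ k) (e k) := by
    simpa using ((hasDerivAt_id (e k)).mul_const (ψ k)).const_add A
  have hden : HasDerivAt (fun t : ℝ => B + t) 1 (e k) := by
    simpa using (hasDerivAt_id (e k)).const_add B
  have hdne : B + e k ≠ 0 := by rw [add_comm, ← hSk]; exact hSpos.ne'
  have hq := hnum.div hden hdne
  have hval : A + e k * ψ k = C := by rw [hCk]; ring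
  have hqne : (A + e k * ψ k) / (B + e k) ≠ 0 := by
    rw [hval, add_comm, ← hSk]
    positivity
  have hlog := (hq.log hqne).neg
  convert hlog using 1
  case e'_4 => rfl
  case e'_5 => rfl
  case e'_8 => rfl
  simp only [Pi.div_apply]
  rw [hval]
  have hBS : B + e k = S := by rw [hSk]; ring
  rw [hBS]
  have hw' : (∑ l, w l * ψ l) = C / S := by
    rw [hC, Finset.sum_div]
    apply Finset.sum_congr rfl
    intro l _
    rw [hw]; ring
  rw [hw']
  field_simp
  ring
end
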